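/- arXiv:math/0208162 — 3 statements merged into one kernel-verified Lean document; each statement's English description precedes it below -/
import Mathlib

section
/- Let H ⊆ G be a finite subgroup such that |H| is invertible in R, and let u: R[G/H] → R[G/H] be an RG-map sending the coset 1H to Σ_{gH ∈ G/H} r_{gH}·gH. Then R[G/H] is a finitely generated projective RG-module and tr_{RG}(u) = |H|⁻¹·r_{1H}; in particular tr_{RG}(id_{R[G/H]}) = |H|⁻¹. -/
/-!
The Hattori–Stallings trace does not depend on the coordinate system, because
`(a * b).coeff 1 = (b * a).coeff 1` in a group ring. The `RG`-linear map `φ : R[G/H] → RG`,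
`gH ↦ g · Σ_{h ∈ H} h`, satisfies `φ(v) · 1H = |H| • v`, so `R[G/H]` has the coordinate system
with one generator `1H` and functional `|H|⁻¹ φ`. With respect to it,
`tr u = |H|⁻¹ · (φ (u 1H)).coeff 1`, and `(φ v).coeff 1 = v.coeff 1H` since
`g · Σ_{h ∈ H} h` involves `1` exactly when `gH = H`.
-/

/-- A finite projective coordinate system for a module over a group ring
`MonoidAlgebra R Γ`; it exists iff the module is finitely generated
projective.  The Hattori–Stallings trace is computed with respect to such a
system (and is independent of the choice). -/
structure ProjCoord (R : Type*) [CommRing R] (Γ : Type*) [Group Γ]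
    (ι : Type*) [Fintype ι]
    (P : Type*) [AddCommMonoid P] [Module (MonoidAlgebra R Γ) P] where
  x : ι → P
  f : ι → (P →ₗ[MonoidAlgebra R Γ] MonoidAlgebra R Γ)
  dual : ∀ p : P, ∑ i, (f i p) • x i = p

/-- The Hattori–Stallings trace (coefficient at the identity of the sum of
diagonal entries). -/
noncomputable def ProjCoord.tr {R : Type*} [CommRing R] {Γ : Type*} [Group Γ]
    {ι : Type*} [Fintype ι] {P : Type*} [AddCommMonoid P]
    [Module (MonoidAlgebra R Γ) P]
    (c : ProjCoord R Γ ι P) (u : P →ₗ[MonoidAlgebra R Γ] P) : R :=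
  ∑ i, (c.f i (u (c.x i))).coeff 1

/-- The permutation module `R[G/H]`, i.e. the free `R`-module on the `G`-set
`G/H`, viewed as a module over the group ring `MonoidAlgebra R G`. -/
noncomputable abbrev permModule (R : Type*) [CommRing R] (G : Type*) [Group G]
    (H : Subgroup G) : Type _ :=
  (Representation.ofMulAction R G (G ⧸ H)).asModule

namespace MonoidAlgebra

variable {R : Type*} [CommSemiring R] {Γ : Type*} [Group Γ]

lemma coeff_one_mul_comm (a b : MonoidAlgebra R Γ) : (a * b).coeff 1 = (b * a).coeff 1 := by
  rw [coeff_mul_apply_left, coeff_mul_apply_right]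
  simp only [mul_one, one_mul, mul_comm]

end MonoidAlgebra

namespace ProjCoord

variable {R : Type*} [CommRing R] {Γ : Type*} [Group Γ]
  {P : Type*} [AddCommMonoid P] [Module (MonoidAlgebra R Γ) P]

lemma tr_eq_tr {ι κ : Type*} [Fintype ι] [Fintype κ]
    (c : ProjCoord R Γ ι P) (d : ProjCoord R Γ κ P) (u : P →ₗ[MonoidAlgebra R Γ] P) :
    c.tr u = d.tr u := by
  have expand_c : ∀ i, (c.f i (u (c.x i))).coeff 1
      = ∑ j, (d.f j (u (c.x i)) * c.f i (d.x j)).coeff 1 := fun i => by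
    conv_lhs => rw [← d.dual (u (c.x i))]
    simp only [map_sum, map_smul, smul_eq_mul, MonoidAlgebra.coeff_sum, Finsupp.finsetSum_apply]
  have expand_d : ∀ j, (d.f j (u (d.x j))).coeff 1
      = ∑ i, (c.f i (d.x j) * d.f j (u (c.x i))).coeff 1 := fun j => by
    conv_lhs => rw [← c.dual (d.x j)]
    simp only [map_sum, map_smul, smul_eq_mul, MonoidAlgebra.coeff_sum, Finsupp.finsetSum_apply]
  simp only [tr, expand_c, expand_d, MonoidAlgebra.coeff_one_mul_comm (c.f _ _)]
  exact Finset.sum_comm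

def single (x : P) (f : P →ₗ[MonoidAlgebra R Γ] MonoidAlgebra R Γ) (h : ∀ p, f p • x = p) :
    ProjCoord R Γ (Fin 1) P where
  x _ := x
  f _ := f
  dual p := by simp [h]

lemma tr_single (x : P) (f : P →ₗ[MonoidAlgebra R Γ] MonoidAlgebra R Γ) (h : ∀ p, f p • x = p)
    (u : P →ₗ[MonoidAlgebra R Γ] P) : (single x f h).tr u = (f (u x)).coeff 1 := by
  simp [tr, single]

end ProjCoord

open MonoidAlgebra

namespace Subgroup

variable (R : Type*) [CommSemiring R] {G : Type*} [Group G] {H : Subgroup G} [Fintype H]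

variable (H) in
noncomputable def normElement : MonoidAlgebra R G :=
  ∑ h : H, single (h : G) 1

lemma single_mul_normElement {g : G} (hg : g ∈ H) :
    single g (1 : R) * H.normElement R = H.normElement R := by
  rw [normElement, Finset.mul_sum]
  exact Fintype.sum_equiv (Equiv.mulLeft ⟨g, hg⟩) _ _ fun h => by simp [single_mul_single]

open Classical in
lemma coeff_normElement (g : G) : (H.normElement R).coeff g = if g ∈ H then 1 else 0 := by
  simp only [normElement, coeff_sum, Finsupp.finsetSum_apply, coeff_single, Finsupp.single_apply]
  split_ifs with hg
  · rw [Fintype.sum_eq_single ⟨g, hg⟩ fun h hne => if_neg fun e => hne (Subtype.ext e), if_pos rfl]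
  · exact Finset.sum_eq_zero fun h _ => if_neg fun (e : (h : G) = g) => hg (e ▸ h.2)

variable (H) in
noncomputable def cosetSum : G ⧸ H → MonoidAlgebra R G :=
  fun q => q.liftOn' (fun g => single g 1 * H.normElement R) fun a b hab => by
    rw [QuotientGroup.leftRel_apply] at hab
    calc single a 1 * H.normElement R = single a 1 * (single (a⁻¹ * b) 1 * H.normElement R) := by
          rw [single_mul_normElement R hab]
      _ = single b 1 * H.normElement R := by
          rw [← mul_assoc, single_mul_single, mul_inv_cancel_left, one_mul]

lemma cosetSum_mk (g : G) : H.cosetSum R g = single g 1 * H.normElement R := rfl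

lemma cosetSum_smul (g : G) (q : G ⧸ H) :
    H.cosetSum R (g • q) = single g 1 * H.cosetSum R q := by
  induction q using QuotientGroup.induction_on with | H x =>
  rw [MulAction.Quotient.smul_mk, cosetSum_mk, cosetSum_mk, ← mul_assoc, single_mul_single,
    one_mul, smul_eq_mul]

open Classical in
lemma coeff_cosetSum_one (q : G ⧸ H) :
    (H.cosetSum R q).coeff 1 = if q = ((1 : G) : G ⧸ H) then 1 else 0 := by
  induction q using QuotientGroup.induction_on with | H g =>
  rw [cosetSum_mk, coeff_single_mul_apply, one_mul, mul_one, coeff_normElement]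
  simp only [QuotientGroup.eq, mul_one]

lemma asAlgebraHom_normElement :
    (Representation.ofMulAction R G (G ⧸ H)).asAlgebraHom (H.normElement R)
      (single ((1 : G) : G ⧸ H) 1) = Fintype.card H • single ((1 : G) : G ⧸ H) 1 := by
  have fix_one : ∀ h : H, (h : G) • ((1 : G) : G ⧸ H) = ((1 : G) : G ⧸ H) := fun h => by
    rw [MulAction.Quotient.smul_mk, QuotientGroup.eq]
    simp [h.2]
  simp [normElement, map_sum, Representation.ofMulAction_single, fix_one]

lemma asAlgebraHom_cosetSum (q : G ⧸ H) :
    (Representation.ofMulAction R G (G ⧸ H)).asAlgebraHom (H.cosetSum R q)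
      (single ((1 : G) : G ⧸ H) 1) = Fintype.card H • single q 1 := by
  induction q using QuotientGroup.induction_on with | H g =>
  rw [cosetSum_mk, map_mul, Module.End.mul_apply, asAlgebraHom_normElement, map_nsmul,
    Representation.asAlgebraHom_single_one, Representation.ofMulAction_single,
    MulAction.Quotient.smul_mk, smul_eq_mul, mul_one]

variable (H) in
noncomputable def cosetSumLinear : MonoidAlgebra R (G ⧸ H) →ₗ[R] MonoidAlgebra R G :=
  Finsupp.linearCombination R (H.cosetSum R) ∘ₗ (coeffLinearEquiv R).toLinearMap

lemma cosetSumLinear_single (q : G ⧸ H) (r : R) :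
    H.cosetSumLinear R (single q r) = r • H.cosetSum R q := by
  simp [cosetSumLinear]

lemma cosetSumLinear_asAlgebraHom (a : MonoidAlgebra R G) (v : MonoidAlgebra R (G ⧸ H)) :
    H.cosetSumLinear R ((Representation.ofMulAction R G (G ⧸ H)).asAlgebraHom a v) =
      a * H.cosetSumLinear R v := by
  induction a using MonoidAlgebra.induction_linear with
  | zero => simp
  | add a b ha hb => simp [add_mul, ha, hb]
  | single g r =>
    induction v using MonoidAlgebra.induction_linear with
    | zero => simp
    | add v w hv hw => rw [map_add, map_add, hv, hw, map_add, mul_add]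
    | single q s =>
      rw [Representation.asAlgebraHom_single, LinearMap.smul_apply,
        Representation.ofMulAction_single, map_smul, cosetSumLinear_single,
        cosetSumLinear_single, cosetSum_smul, mul_smul_comm, smul_comm r s, ← smul_mul_assoc,
        smul_single', mul_one]

lemma asAlgebraHom_cosetSumLinear (v : MonoidAlgebra R (G ⧸ H)) :
    (Representation.ofMulAction R G (G ⧸ H)).asAlgebraHom (H.cosetSumLinear R v)
      (single ((1 : G) : G ⧸ H) 1) = Fintype.card H • v := by
  induction v using MonoidAlgebra.induction_linear with
  | zero => simp
  | add v w hv hw => rw [map_add, map_add, LinearMap.add_apply, hv, hw, smul_add]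
  | single q r =>
    rw [cosetSumLinear_single, map_smul, LinearMap.smul_apply, asAlgebraHom_cosetSum, smul_comm,
      smul_single', mul_one]

lemma coeff_cosetSumLinear_one (v : MonoidAlgebra R (G ⧸ H)) :
    (H.cosetSumLinear R v).coeff 1 = v.coeff ((1 : G) : G ⧸ H) := by
  classical
  induction v using MonoidAlgebra.induction_linear with
  | zero => simp
  | add v w hv hw => simp [hv, hw]
  | single q r =>
    simp [cosetSumLinear_single, coeff_cosetSum_one, Finsupp.single_apply]

end Subgroup

namespace permModule

variable (R : Type*) [CommRing R] (G : Type*) [Group G] (H : Subgroup G)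

noncomputable def basePoint : permModule R G H :=
  (Representation.ofMulAction R G (G ⧸ H)).asModuleEquiv.symm
    (ofCoeff (Finsupp.single ((1 : G) : G ⧸ H) 1))

variable [Fintype H]

noncomputable def toGroupAlgebra : permModule R G H →ₗ[MonoidAlgebra R G] MonoidAlgebra R G where
  toFun p := H.cosetSumLinear R ((Representation.ofMulAction R G (G ⧸ H)).asModuleEquiv p)
  map_add' p q := by simp only [map_add]
  map_smul' a p := by
    rw [Representation.asModuleEquiv_map_smul, Subgroup.cosetSumLinear_asAlgebraHom]
    rfl

variable {R G H}

lemma toGroupAlgebra_smul_basePoint (p : permModule R G H) :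
    toGroupAlgebra R G H p • basePoint R G H = Fintype.card H • p := by
  apply (Representation.ofMulAction R G (G ⧸ H)).asModuleEquiv.injective
  rw [Representation.asModuleEquiv_map_smul, basePoint, LinearEquiv.apply_symm_apply, map_nsmul]
  exact Subgroup.asAlgebraHom_cosetSumLinear R _

lemma coeff_toGroupAlgebra_one (p : permModule R G H) :
    (toGroupAlgebra R G H p).coeff 1 =
      ((Representation.ofMulAction R G (G ⧸ H)).asModuleEquiv p).coeff ((1 : G) : G ⧸ H) :=
  Subgroup.coeff_cosetSumLinear_one R _

variable (R G H)

noncomputable def projCoord (hH : IsUnit (Nat.card H : R)) :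
    ProjCoord R G (Fin 1) (permModule R G H) :=
  .single (basePoint R G H) (Ring.inverse (Nat.card H : R) • toGroupAlgebra R G H) fun p => by
    rw [LinearMap.smul_apply, smul_assoc, toGroupAlgebra_smul_basePoint,
      ← Nat.card_eq_fintype_card, ← Nat.cast_smul_eq_nsmul R, smul_smul,
      Ring.inverse_mul_cancel _ hH, one_smul]

lemma tr_projCoord (hH : IsUnit (Nat.card H : R))
    (u : permModule R G H →ₗ[MonoidAlgebra R G] permModule R G H) :
    (projCoord R G H hH).tr u = Ring.inverse (Nat.card H : R) *
      ((Representation.ofMulAction R G (G ⧸ H)).asModuleEquiv (u (basePoint R G H))).coeff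
        ((1 : G) : G ⧸ H) := by
  rw [projCoord, ProjCoord.tr_single, LinearMap.smul_apply, coeff_smul_apply,
    coeff_toGroupAlgebra_one, smul_eq_mul]

end permModule

/-- let `H ⊆ G` be a finite subgroup with `|H|` invertible in
`R`, and let `u : R[G/H] → R[G/H]` be an `RG`-map sending `1H` to
`∑_{gH} r_{gH}·gH`.  Then `R[G/H]` is a finitely generated projective
`RG`-module, and (for every finite projective coordinate system)
`tr_{RG}(u) = |H|⁻¹ · r_{1H}`; in particular
`tr_{RG}(id) = |H|⁻¹` (note `r_{1H} = 1` for `u = id`). -/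
theorem hattoriStallings_trace_permModule
    (R : Type*) [CommRing R] (G : Type*) [Group G]
    (H : Subgroup G) [Finite (↥H)]
    (hH : IsUnit ((Nat.card (↥H) : R)))
    (u : permModule R G H →ₗ[MonoidAlgebra R G] permModule R G H) :
    (∃ n : ℕ, Nonempty (ProjCoord R G (Fin n) (permModule R G H))) ∧
      (∀ {ι : Type} [Fintype ι] (c : ProjCoord R G ι (permModule R G H)),
        c.tr u = Ring.inverse ((Nat.card (↥H) : R)) *
          (((Representation.ofMulAction R G (G ⧸ H)).asModuleEquiv
              (u ((Representation.ofMulAction R G (G ⧸ H)).asModuleEquiv.symm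
                (MonoidAlgebra.ofCoeff (Finsupp.single ((1 : G) : G ⧸ H) (1 : R)))))).coeff
            ((1 : G) : G ⧸ H))) ∧
      (∀ {ι : Type} [Fintype ι] (c : ProjCoord R G ι (permModule R G H)),
        c.tr (LinearMap.id) = Ring.inverse ((Nat.card (↥H) : R))) := by
  cases nonempty_fintype H
  let c₀ := permModule.projCoord R G H hH
  refine ⟨⟨1, ⟨c₀⟩⟩, fun c => (c.tr_eq_tr c₀ u).trans (permModule.tr_projCoord R G H hH u),
    fun c => ?_⟩
  rw [c.tr_eq_tr c₀, permModule.tr_projCoord]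
  simp [permModule.basePoint]
end

section
/- For a finite group G acting on a finite proper relative G-CW-pair (X,A) and a cellular G-self-map (f,f₀), the orbifold Lefschetz number over ℚG equals |G|⁻¹ times the ordinary Lefschetz number: L^{ℚG}(f,f₀) = (1/|G|)·L^{ℤ[{1}]}(f,f₀). -/
/-- The cellular chain module `ℚ[I]` on a `G`-set `I` of cells, as a module
over the group ring `MonoidAlgebra ℚ G`. -/
noncomputable abbrev cellModule (G : Type*) [Group G] (I : Type*)
    [MulAction G I] : Type _ :=
  (Representation.ofMulAction ℚ G I).asModule

/-- The underlying `ℚ`-linear endomorphism of `ℚ[I]` (forgetting the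
`G`-action) of an `RG`-endomorphism of the cell module. -/
noncomputable def cellModule.forget (G : Type*) [Group G] (I : Type*)
    [MulAction G I]
    (u : cellModule G I →ₗ[MonoidAlgebra ℚ G] cellModule G I) :
    (I →₀ ℚ) →ₗ[ℚ] (I →₀ ℚ) :=
  (MonoidAlgebra.coeffLinearEquiv ℚ).toLinearMap ∘ₗ
  (((Representation.ofMulAction ℚ G I).asModuleEquiv.toAddMonoidHom.comp
    (u.toAddMonoidHom.comp
      (Representation.ofMulAction ℚ G I).asModuleEquiv.symm.toAddMonoidHom))).toRatLinearMap ∘ₗ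
  (MonoidAlgebra.coeffLinearEquiv ℚ).symm.toLinearMap

/-!
The dual basis exhibits `P` as a retract of the free module `k[G]^ι`, so by cyclicity of the
trace `tr_k u = tr_k (coords ∘ u ∘ combination)`, where `coords ∘ u ∘ combination` is a
`k[G]`-linear endomorphism of `k[G]^ι`. In the `k`-basis `(i, g)` of `k[G]^ι` the diagonal
entry at `(i, g)` of such an endomorphism `M` is the coefficient of `1` in the `i`-th component
of `M eᵢ`, independently of `g`; summing gives `|G|` times the Hattori–Stallings trace.
-/

open MonoidAlgebra

namespace ProjCoord

variable {R : Type*} [CommRing R] {G : Type*} [Group G] {ι : Type*} [Fintype ι]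
  {P : Type*} [AddCommGroup P] [Module (MonoidAlgebra R G) P]

noncomputable def coords (c : ProjCoord R G ι P) :
    P →ₗ[MonoidAlgebra R G] (ι → MonoidAlgebra R G) :=
  LinearMap.pi c.f

noncomputable def combination (c : ProjCoord R G ι P) :
    (ι → MonoidAlgebra R G) →ₗ[MonoidAlgebra R G] P :=
  Fintype.linearCombination (MonoidAlgebra R G) c.x

theorem combination_comp_coords (c : ProjCoord R G ι P) :
    c.combination ∘ₗ c.coords = LinearMap.id :=
  LinearMap.ext fun p => by simp [combination, coords, Fintype.linearCombination_apply, c.dual]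

theorem combination_single [DecidableEq ι] (c : ProjCoord R G ι P) (i : ι) :
    c.combination (Pi.single i 1) = c.x i := by
  simp [combination, Fintype.linearCombination_apply_single]

end ProjCoord

theorem trace_restrictScalars_pi {k : Type*} [CommRing k] {G : Type*} [Group G] [Fintype G]
    {ι : Type*} [Fintype ι] [DecidableEq ι]
    (M : (ι → MonoidAlgebra k G) →ₗ[MonoidAlgebra k G] (ι → MonoidAlgebra k G)) :
    LinearMap.trace k _ (M.restrictScalars k) =
      Fintype.card G * ∑ i, (M (Pi.single i 1) i).coeff 1 := by
  classical
  have hM : ∀ i g, M (Pi.single i (single g 1)) = single g (1 : k) • M (Pi.single i 1) := by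
    intro i g
    rw [← map_smul, ← Pi.single_smul', smul_eq_mul, mul_one]
  have hrepr : ∀ x : MonoidAlgebra k G, (MonoidAlgebra.basis G k).repr x = x.coeff := fun _ => rfl
  rw [LinearMap.trace_eq_matrix_trace k (Pi.basis fun _ => MonoidAlgebra.basis G k), Matrix.trace,
    Fintype.sum_sigma, Finset.mul_sum]
  refine Finset.sum_congr rfl fun i _ => ?_
  simp [LinearMap.toMatrix_apply, Pi.basis_repr, hM, hrepr]

theorem ProjCoord.trace_restrictScalars {k : Type*} [Field k] {G : Type*} [Group G] [Fintype G]
    {ι : Type*} [Fintype ι] {P : Type*} [AddCommGroup P] [Module (MonoidAlgebra k G) P]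
    [Module k P] [IsScalarTower k (MonoidAlgebra k G) P]
    (c : ProjCoord k G ι P) (u : P →ₗ[MonoidAlgebra k G] P) :
    LinearMap.trace k P (u.restrictScalars k) = Fintype.card G * c.tr u := by
  classical
  have hsurj : Function.Surjective c.combination :=
    Function.LeftInverse.surjective (LinearMap.congr_fun c.combination_comp_coords)
  have : Module.Finite k P := Module.Finite.of_surjective (c.combination.restrictScalars k) hsurj
  have hu : u.restrictScalars k =
      c.combination.restrictScalars k ∘ₗ (c.coords ∘ₗ u).restrictScalars k := by
    rw [← LinearMap.restrictScalars_comp, ← LinearMap.comp_assoc, c.combination_comp_coords,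
      LinearMap.id_comp]
  rw [hu, LinearMap.trace_comp_comm', ← LinearMap.restrictScalars_comp, trace_restrictScalars_pi]
  simp [ProjCoord.tr, ProjCoord.combination_single, ProjCoord.coords]

theorem cellModule.trace_forget (G : Type*) [Group G] (I : Type*) [MulAction G I]
    (u : cellModule G I →ₗ[MonoidAlgebra ℚ G] cellModule G I) :
    LinearMap.trace ℚ (I →₀ ℚ) (cellModule.forget G I u) =
      LinearMap.trace ℚ (cellModule G I) (u.restrictScalars ℚ) :=
  LinearMap.trace_conj' _
    ((Representation.ofMulAction ℚ G I).asModuleEquiv.trans (MonoidAlgebra.coeffLinearEquiv ℚ))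

theorem orbifold_lefschetz_of_finite_group_general
    (G : Type*) [Group G] [Fintype G]
    (I : ℕ → Type*) [∀ p, MulAction G (I p)]
    (d : ℕ)
    (u : ∀ p, cellModule G (I p) →ₗ[MonoidAlgebra ℚ G] cellModule G (I p))
    {ι : ℕ → Type} [∀ p, Fintype (ι p)]
    (c : ∀ p, ProjCoord ℚ G (ι p) (cellModule G (I p))) :
    (∑ p ∈ Finset.range d, (-1 : ℚ) ^ p * (c p).tr (u p)) =
      (Fintype.card G : ℚ)⁻¹ *
        ∑ p ∈ Finset.range d, (-1 : ℚ) ^ p *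
          LinearMap.trace ℚ (I p →₀ ℚ) (cellModule.forget G (I p) (u p)) := by
  have hG : (Fintype.card G : ℚ) ≠ 0 := Nat.cast_ne_zero.mpr Fintype.card_ne_zero
  simp only [cellModule.trace_forget, (c _).trace_restrictScalars, Finset.mul_sum]
  refine Finset.sum_congr rfl fun p _ => ?_
  field_simp

/-- for a finite group `G`, a finite proper relative
`G`-CW-pair `(X,A)` (with cell `G`-sets `I p`, all empty above the dimension
`d`) and a cellular `G`-self-map `(f,f₀)` inducing the chain endomorphisms
`u p`, the orbifold Lefschetz number over `ℚG` equals `|G|⁻¹` times the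
ordinary Lefschetz number:
`L^{ℚG}(f,f₀) = (1/|G|) · L^{ℤ[{1}]}(f,f₀)`. -/
theorem orbifold_lefschetz_of_finite_group
    (G : Type*) [Group G] [Fintype G]
    (I : ℕ → Type*) [∀ p, MulAction G (I p)] [∀ p, Fintype (I p)]
    (d : ℕ) (hd : ∀ p, d ≤ p → IsEmpty (I p))
    (u : ∀ p, cellModule G (I p) →ₗ[MonoidAlgebra ℚ G] cellModule G (I p))
    {ι : ℕ → Type} [∀ p, Fintype (ι p)]
    (c : ∀ p, ProjCoord ℚ G (ι p) (cellModule G (I p))) :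
    (∑ p ∈ Finset.range d, (-1 : ℚ) ^ p * (c p).tr (u p)) =
      (Fintype.card G : ℚ)⁻¹ *
        ∑ p ∈ Finset.range d, (-1 : ℚ) ^ p *
          LinearMap.trace ℚ (I p →₀ ℚ) (cellModule.forget G (I p) (u p)) :=
  orbifold_lefschetz_of_finite_group_general G I d u c
end

section
/- For a cellular G-self-map (f,f₀) of a finite proper relative G-CW-complex (X,A), the orbifold Lefschetz number can be computed from incidence numbers: L^{ℚG}(f,f₀) = Σ_{p≥0} (−1)^p · Σ_{Ge ∈ G\I_p(X,A)} |G_e|⁻¹ · inc(f,e). -/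
/-- The incidence number `inc(f,e)` of a cellular self-map at an open cell
`e`: the diagonal coefficient at `e` of the induced chain endomorphism in the
basis of open cells. -/
noncomputable def incidence (G : Type*) [Group G] (I : Type*) [MulAction G I]
    (u : cellModule G I →ₗ[MonoidAlgebra ℚ G] cellModule G I) (e : I) : ℚ :=
  (cellModule.forget G I u (Finsupp.single e 1)) e

/-!
The Hattori–Stallings trace is independent of the chosen dual basis, because `a ↦ a.coeff 1` is a
trace on the group ring. So it suffices to compute it in one explicit dual basis of the
permutation module `k[I]`: one generator `e` per orbit, with dual functional sending a cell `i` to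
`|G_e|⁻¹ ∑_{g • e = i} g`. The diagonal entry of `u` at that generator has coefficient at `1`
equal to `|G_e|⁻¹` times the coefficient of `e` in `u e`, which is `|G_e|⁻¹ · inc(f,e)`.
-/

open MulAction

theorem MonoidAlgebra.coeff_one_mul_comm_s9 {R G : Type*} [CommSemiring R] [Group G]
    (a b : MonoidAlgebra R G) : (a * b).coeff 1 = (b * a).coeff 1 := by
  induction b using MonoidAlgebra.induction_linear with
  | zero => simp
  | add b₁ b₂ h₁ h₂ =>
    simp only [mul_add, add_mul, MonoidAlgebra.coeff_add, Finsupp.add_apply, h₁, h₂]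
  | single h s =>
    rw [MonoidAlgebra.coeff_mul_single_apply, MonoidAlgebra.coeff_single_mul_apply, one_mul,
      mul_one, mul_comm]

theorem ProjCoord.tr_eq_tr_s9 {R : Type*} [CommRing R] {G : Type*} [Group G]
    {ι ι' : Type*} [Fintype ι] [Fintype ι'] {P : Type*} [AddCommMonoid P]
    [Module (MonoidAlgebra R G) P] (c : ProjCoord R G ι P) (c' : ProjCoord R G ι' P)
    (u : P →ₗ[MonoidAlgebra R G] P) : c.tr u = c'.tr u := by
  have expand : ∀ (i : ι) (j : ι'),
      c'.f j (c.x i) * c.f i (u (c'.x j)) = c.f i (u (c'.f j (c.x i) • c'.x j)) ∧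
      c.f i (u (c'.x j)) * c'.f j (c.x i) = c'.f j (c.f i (u (c'.x j)) • c.x i) := by
    intro i j
    simp only [map_smul, smul_eq_mul, and_self]
  calc c.tr u
      = ∑ i, ∑ j, (c'.f j (c.x i) * c.f i (u (c'.x j))).coeff 1 := by
        refine Finset.sum_congr rfl fun i _ => ?_
        simp only [(expand i _).1, ← Finset.sum_apply', ← MonoidAlgebra.coeff_sum, ← map_sum,
          c'.dual]
    _ = ∑ j, ∑ i, (c.f i (u (c'.x j)) * c'.f j (c.x i)).coeff 1 := by
        rw [Finset.sum_comm]
        simp only [MonoidAlgebra.coeff_one_mul_comm_s9]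
    _ = c'.tr u := by
        refine Finset.sum_congr rfl fun j _ => ?_
        simp only [(expand _ j).2, ← Finset.sum_apply', ← MonoidAlgebra.coeff_sum, ← map_sum,
          c.dual]

namespace MulAction

variable {G I : Type*} [Group G] [MulAction G I] {e : I}

theorem finite_setOf_smul_eq (he : (stabilizer G e : Set G).Finite) (i : I) :
    {g : G | g • e = i}.Finite := by
  by_cases hi : i ∈ orbit G e
  · obtain ⟨g₀, rfl⟩ := hi
    refine (he.image (g₀ * ·)).subset fun g hg => ⟨g₀⁻¹ * g, ?_, mul_inv_cancel_left g₀ g⟩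
    simp only [SetLike.mem_coe, mem_stabilizer_iff, mul_smul, Set.mem_ofPred_eq.mp hg,
      inv_smul_smul]
  · exact Set.finite_empty.subset fun g hg => hi ⟨g, hg⟩

noncomputable def transporter (he : (stabilizer G e : Set G).Finite) (i : I) : Finset G :=
  (finite_setOf_smul_eq he i).toFinset

variable (he : (stabilizer G e : Set G).Finite)

@[simp]
theorem mem_transporter {i : I} {g : G} : g ∈ transporter he i ↔ g • e = i := by
  simp [transporter]

theorem transporter_smul (h : G) (i : I) :
    transporter he (h • i) = (transporter he i).map (mulLeftEmbedding h) := by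
  ext g
  simp only [mem_transporter, Finset.mem_map, mulLeftEmbedding_apply]
  refine ⟨fun hg => ⟨h⁻¹ * g, by rw [mul_smul, hg, inv_smul_smul], mul_inv_cancel_left h g⟩, ?_⟩
  rintro ⟨g', hg', rfl⟩
  rw [mul_smul, hg']

theorem card_transporter {i : I} (hi : i ∈ orbit G e) :
    (transporter he i).card = Nat.card (stabilizer G e) := by
  obtain ⟨g₀, rfl⟩ := hi
  have h_self : transporter he e = he.toFinset := by
    ext g
    simp [mem_stabilizer_iff]
  rw [transporter_smul, Finset.card_map, h_self, ← Nat.card_eq_card_finite_toFinset he]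
  rfl

theorem transporter_eq_empty {i : I} (hi : i ∉ orbit G e) : transporter he i = ∅ :=
  Finset.eq_empty_of_forall_notMem fun g hg => hi ⟨g, (mem_transporter he).mp hg⟩

theorem mem_orbit_out_iff (i : I) (o : Quotient (orbitRel G I)) :
    i ∈ orbit G o.out ↔ o = Quotient.mk (orbitRel G I) i := by
  rw [← orbitRel_apply, ← Quotient.eq (r := orbitRel G I), Quotient.out_eq, eq_comm]

end MulAction

namespace Representation

open scoped Classical

variable {k G I : Type*} [Field k] [Group G] [MulAction G I] {e : I}
  (he : (stabilizer G e : Set G).Finite)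

noncomputable def orbitDualCoeff (i : I) : MonoidAlgebra k G :=
  (Nat.card (stabilizer G e) : k)⁻¹ • ∑ g ∈ transporter he i, MonoidAlgebra.single g 1

theorem orbitDualCoeff_smul (h : G) (i : I) :
    orbitDualCoeff (k := k) he (h • i) = MonoidAlgebra.single h 1 * orbitDualCoeff he i := by
  simp only [orbitDualCoeff, mul_smul_comm, transporter_smul, Finset.sum_map, Finset.mul_sum,
    mulLeftEmbedding_apply, MonoidAlgebra.single_mul_single, one_mul]

theorem coeff_one_orbitDualCoeff (i : I) :
    (orbitDualCoeff (k := k) he i).coeff 1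
      = if i = e then (Nat.card (stabilizer G e) : k)⁻¹ else 0 := by
  simp only [orbitDualCoeff, MonoidAlgebra.coeff_smul, Finsupp.smul_apply,
    MonoidAlgebra.coeff_sum, Finset.sum_apply', MonoidAlgebra.coeff_single, Finsupp.single_apply,
    Finset.sum_ite_eq', mem_transporter, one_smul, smul_eq_mul, mul_ite, mul_one, mul_zero]
  exact if_congr eq_comm rfl rfl

theorem asAlgebraHom_orbitDualCoeff_single [CharZero k] (i : I) :
    (ofMulAction k G I).asAlgebraHom (orbitDualCoeff he i) (MonoidAlgebra.single e 1)
      = if i ∈ orbit G e then MonoidAlgebra.single i 1 else 0 := by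
  have h_term : ∀ g ∈ transporter he i, (ofMulAction k G I).asAlgebraHom
      (MonoidAlgebra.single g 1) (MonoidAlgebra.single e (1 : k)) = MonoidAlgebra.single i 1 :=
    fun g hg => by
      rw [asAlgebraHom_single_one, ofMulAction_single, (mem_transporter he).mp hg]
  rw [orbitDualCoeff, map_smul, LinearMap.smul_apply, map_sum, LinearMap.sum_apply,
    Finset.sum_congr rfl h_term, Finset.sum_const]
  split_ifs with hi
  · have : Finite (stabilizer G e) := he.to_subtype
    rw [card_transporter he hi, ← Nat.cast_smul_eq_nsmul k, smul_smul,
      inv_mul_cancel₀ (Nat.cast_ne_zero.mpr Nat.card_pos.ne'), one_smul]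
  · rw [transporter_eq_empty he hi, Finset.card_empty, zero_smul, smul_zero]

noncomputable def orbitDualFun : MonoidAlgebra k I →ₗ[k] MonoidAlgebra k G :=
  Finsupp.linearCombination k (orbitDualCoeff he) ∘ₗ
    (MonoidAlgebra.coeffLinearEquiv k).toLinearMap

theorem orbitDualFun_single (i : I) (a : k) :
    orbitDualFun he (MonoidAlgebra.single i a) = a • orbitDualCoeff he i := by
  simp [orbitDualFun]

theorem coeff_one_orbitDualFun (w : MonoidAlgebra k I) :
    (orbitDualFun he w).coeff 1 = (Nat.card (stabilizer G e) : k)⁻¹ * w.coeff e := by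
  induction w using MonoidAlgebra.induction_linear with
  | zero => simp
  | add w₁ w₂ h₁ h₂ =>
    simp only [map_add, MonoidAlgebra.coeff_add, Finsupp.add_apply, h₁, h₂, mul_add]
  | single i a =>
    simp only [orbitDualFun_single, MonoidAlgebra.coeff_smul, Finsupp.smul_apply,
      coeff_one_orbitDualCoeff, MonoidAlgebra.coeff_single, Finsupp.single_apply, smul_eq_mul]
    split_ifs <;> ring

theorem orbitDualFun_ofMulAction (g : G) (v : MonoidAlgebra k I) :
    orbitDualFun he (ofMulAction k G I g v) = MonoidAlgebra.single g 1 * orbitDualFun he v := by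
  induction v using MonoidAlgebra.induction_linear with
  | zero => simp
  | add v₁ v₂ h₁ h₂ => rw [map_add, map_add, map_add, mul_add, h₁, h₂]
  | single i a =>
    rw [ofMulAction_single, orbitDualFun_single, orbitDualFun_single, orbitDualCoeff_smul,
      mul_smul_comm]

noncomputable def orbitDual :
    (ofMulAction k G I).asModule →ₗ[MonoidAlgebra k G] MonoidAlgebra k G where
  toFun x := orbitDualFun he ((ofMulAction k G I).asModuleEquiv x)
  map_add' x y := by rw [map_add, map_add]
  map_smul' r x := by
    rw [asModuleEquiv_map_smul, RingHom.id_apply, smul_eq_mul]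
    generalize (ofMulAction k G I).asModuleEquiv x = v
    induction r using MonoidAlgebra.induction_linear with
    | zero => simp
    | add r₁ r₂ h₁ h₂ => rw [map_add, LinearMap.add_apply, map_add, h₁, h₂, add_mul]
    | single g a =>
      rw [asAlgebraHom_single, LinearMap.smul_apply, map_smul, orbitDualFun_ofMulAction,
        ← smul_mul_assoc, MonoidAlgebra.smul_single', mul_one]

theorem orbitDual_apply (x : (ofMulAction k G I).asModule) :
    orbitDual he x = orbitDualFun he ((ofMulAction k G I).asModuleEquiv x) :=
  rfl

variable [CharZero k] [Fintype (Quotient (orbitRel G I))]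
  (hiso : ∀ e : I, (stabilizer G e : Set G).Finite)

theorem sum_asAlgebraHom_orbitDualFun (v : MonoidAlgebra k I) :
    ∑ o : Quotient (orbitRel G I),
      (ofMulAction k G I).asAlgebraHom (orbitDualFun (hiso o.out) v) (MonoidAlgebra.single o.out 1)
      = v := by
  induction v using MonoidAlgebra.induction_linear with
  | zero => simp
  | add v₁ v₂ h₁ h₂ => simp only [map_add, LinearMap.add_apply, Finset.sum_add_distrib, h₁, h₂]
  | single i a =>
    simp only [orbitDualFun_single, map_smul, LinearMap.smul_apply,
      asAlgebraHom_orbitDualCoeff_single, mem_orbit_out_iff, smul_ite, smul_zero,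
      Finset.sum_ite_eq', Finset.mem_univ, if_true, MonoidAlgebra.smul_single', mul_one]

noncomputable def orbitProjCoord :
    ProjCoord k G (Quotient (orbitRel G I)) (ofMulAction k G I).asModule where
  x o := (ofMulAction k G I).asModuleEquiv.symm (MonoidAlgebra.single o.out 1)
  f o := orbitDual (hiso o.out)
  dual p := (ofMulAction k G I).asModuleEquiv.injective <| by
    simpa only [map_sum, asModuleEquiv_map_smul, LinearEquiv.apply_symm_apply,
      orbitDual_apply] using
      sum_asAlgebraHom_orbitDualFun hiso ((ofMulAction k G I).asModuleEquiv p)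

theorem orbitProjCoord_tr
    (u : (ofMulAction k G I).asModule →ₗ[MonoidAlgebra k G] (ofMulAction k G I).asModule) :
    (orbitProjCoord hiso).tr u = ∑ o : Quotient (orbitRel G I),
      (Nat.card (stabilizer G o.out) : k)⁻¹ *
        ((ofMulAction k G I).asModuleEquiv
          (u ((ofMulAction k G I).asModuleEquiv.symm (MonoidAlgebra.single o.out 1)))).coeff
            o.out :=
  Finset.sum_congr rfl fun o _ => coeff_one_orbitDualFun (hiso o.out) _

end Representation

theorem orbifold_lefschetz_eq_incidence_sum_general
    (G : Type*) [Group G]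
    (I : ℕ → Type*) [∀ p, MulAction G (I p)]
    (hiso : ∀ (p : ℕ) (e : I p), (MulAction.stabilizer G e : Set G).Finite)
    [∀ p, Fintype (Quotient (MulAction.orbitRel G (I p)))]
    (d : ℕ)
    (u : ∀ p, cellModule G (I p) →ₗ[MonoidAlgebra ℚ G] cellModule G (I p))
    {ι : ℕ → Type} [∀ p, Fintype (ι p)]
    (c : ∀ p, ProjCoord ℚ G (ι p) (cellModule G (I p))) :
    (∑ p ∈ Finset.range d, (-1 : ℚ) ^ p * (c p).tr (u p)) =
      ∑ p ∈ Finset.range d, (-1 : ℚ) ^ p *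
        ∑ o : Quotient (MulAction.orbitRel G (I p)),
          (Nat.card (MulAction.stabilizer G o.out) : ℚ)⁻¹ *
            incidence G (I p) (u p) o.out := by
  refine Finset.sum_congr rfl fun p _ => ?_
  rw [(c p).tr_eq_tr_s9 (Representation.orbitProjCoord (hiso p)),
    Representation.orbitProjCoord_tr]
  rfl

/-- for a cellular `G`-self-map `(f,f₀)` of a finite proper
relative `G`-CW-pair `(X,A)` (cell `G`-sets `I p` with finite isotropy groups,
finitely many orbits, empty above the dimension `d`), the orbifold Lefschetz
number is computed from the incidence numbers:
`L^{ℚG}(f,f₀) = ∑_{p≥0} (−1)^p · ∑_{Ge ∈ G\I_p(X,A)} |G_e|⁻¹ · inc(f,e)`. -/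
theorem orbifold_lefschetz_eq_incidence_sum
    (G : Type*) [Group G]
    (I : ℕ → Type*) [∀ p, MulAction G (I p)]
    (hiso : ∀ (p : ℕ) (e : I p), (MulAction.stabilizer G e : Set G).Finite)
    [∀ p, Fintype (Quotient (MulAction.orbitRel G (I p)))]
    (d : ℕ) (hd : ∀ p, d ≤ p → IsEmpty (I p))
    (u : ∀ p, cellModule G (I p) →ₗ[MonoidAlgebra ℚ G] cellModule G (I p))
    {ι : ℕ → Type} [∀ p, Fintype (ι p)]
    (c : ∀ p, ProjCoord ℚ G (ι p) (cellModule G (I p))) :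
    (∑ p ∈ Finset.range d, (-1 : ℚ) ^ p * (c p).tr (u p)) =
      ∑ p ∈ Finset.range d, (-1 : ℚ) ^ p *
        ∑ o : Quotient (MulAction.orbitRel G (I p)),
          (Nat.card (MulAction.stabilizer G o.out) : ℚ)⁻¹ *
            incidence G (I p) (u p) o.out :=
  orbifold_lefschetz_eq_incidence_sum_general G I hiso d u c
end
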